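/- If μ is a nonzero complex number with μ² + μ⁻² = 2 − ω, μ + μ⁻¹ ≠ 0, and |μ| ≠ 1, then there exists N ∈ ℕ such that for all m, n ≥ N, τ_m = τ_n implies m = n; in particular the values τ_n are pairwise distinct for sufficiently large n. -/

import Mathlib

/-! `A = Y X⁻¹` has trace `2 - ω = μ² + μ⁻²` and determinant `1`, so by Cayley–Hamilton
`τ (n + 2) = (μ² + μ⁻²) τ (n + 1) - τ n` with `τ 0 = τ 1 = 2`, which gives
`τ n = 2 (μ⁻¹ μ^(2n) + μ μ^(-2n)) / (μ + μ⁻¹)`. This is symmetric under `μ ↦ μ⁻¹`, so we may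
take `|μ| > 1`; then `τ n` is a nonzero multiple of `μ^(2n)` up to a bounded error, and `|τ n|`
is eventually strictly increasing. -/

open Matrix

/-- The matrix `X = [[1,1],[0,1]]`. -/
noncomputable def Xmat : Matrix (Fin 2) (Fin 2) ℂ := !![1, 1; 0, 1]

/-- The matrix `Y = [[1,0],[ω,1]]`. -/
noncomputable def Ymat (ω : ℂ) : Matrix (Fin 2) (Fin 2) ℂ := !![1, 0; ω, 1]

/-- `τ n` is the trace of `X ⬝ (Y ⬝ X⁻¹)^n`. -/
noncomputable def τ (ω : ℂ) (n : ℕ) : ℂ := (Xmat * (Ymat ω * Xmat⁻¹) ^ n).trace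

theorem Matrix.sq_eq_trace_smul_sub_det_smul {R : Type*} [CommRing R] [Nontrivial R]
    (A : Matrix (Fin 2) (Fin 2) R) : A ^ 2 = A.trace • A - A.det • 1 := by
  have h := A.aeval_self_charpoly
  simp only [charpoly_fin_two, map_add, Polynomial.aeval_sub, map_pow, Polynomial.aeval_X, map_mul,
    Polynomial.aeval_C, Algebra.algebraMap_eq_smul_one, smul_mul_assoc, one_mul] at h
  rw [eq_sub_iff_add_eq, ← sub_eq_zero, ← h]
  abel

theorem Matrix.trace_mul_pow_add_two {R : Type*} [CommRing R] [Nontrivial R]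
    (A B : Matrix (Fin 2) (Fin 2) R) (n : ℕ) :
    (B * A ^ (n + 2)).trace = A.trace * (B * A ^ (n + 1)).trace - A.det * (B * A ^ n).trace := by
  rw [pow_add, sq_eq_trace_smul_sub_det_smul, Matrix.mul_sub, Matrix.mul_smul, Matrix.mul_smul,
    Matrix.mul_one, ← pow_succ, Matrix.mul_sub, Matrix.mul_smul, Matrix.mul_smul, trace_sub,
    trace_smul, trace_smul, smul_eq_mul, smul_eq_mul]

theorem Xmat_inv : Xmat⁻¹ = !![1, -1; 0, 1] :=
  inv_eq_right_inv (by simp [Xmat, one_fin_two])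

theorem Ymat_mul_Xmat_inv (ω : ℂ) : Ymat ω * Xmat⁻¹ = !![1, -1; ω, 1 - ω] := by
  rw [Xmat_inv, Ymat, mul_fin_two]
  congr <;> ring

theorem τ_zero (ω : ℂ) : τ ω 0 = 2 := by
  norm_num [τ, Xmat, trace_fin_two]

theorem τ_one (ω : ℂ) : τ ω 1 = 2 := by
  rw [τ, pow_one, Ymat_mul_Xmat_inv, Xmat, mul_fin_two, trace_fin_two_of]
  ring

theorem τ_add_two (ω : ℂ) (n : ℕ) : τ ω (n + 2) = (2 - ω) * τ ω (n + 1) - τ ω n := by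
  have htrace : (Ymat ω * Xmat⁻¹).trace = 2 - ω := by
    rw [Ymat_mul_Xmat_inv, trace_fin_two_of]; ring
  have hdet : (Ymat ω * Xmat⁻¹).det = 1 := by
    rw [Ymat_mul_Xmat_inv, det_fin_two_of]; ring
  rw [τ, τ, τ, trace_mul_pow_add_two, htrace, hdet, one_mul]

theorem τ_eq_of_sq_add_inv_sq {ω μ : ℂ} (hμ : μ ≠ 0) (hchar : μ ^ 2 + μ⁻¹ ^ 2 = 2 - ω)
    (hden : μ + μ⁻¹ ≠ 0) (n : ℕ) :
    τ ω n = 2 / (μ + μ⁻¹) * (μ⁻¹ * (μ ^ 2) ^ n + μ * (μ⁻¹ ^ 2) ^ n) := by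
  have hμμ : μ * μ⁻¹ = 1 := mul_inv_cancel₀ hμ
  induction n using Nat.twoStepInduction with
  | zero =>
    rw [τ_zero, pow_zero, pow_zero, mul_one, mul_one, add_comm μ⁻¹, div_mul_cancel₀ _ hden]
  | one =>
    have hμ' : μ⁻¹ * (μ ^ 2) ^ 1 + μ * (μ⁻¹ ^ 2) ^ 1 = μ + μ⁻¹ := by
      linear_combination (μ + μ⁻¹) * hμμ
    rw [τ_one, hμ', div_mul_cancel₀ _ hden]
  | more n ih₀ ih₁ =>
    rw [τ_add_two, ih₀, ih₁, ← hchar]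
    -- the defect is a multiple of `(μ μ⁻¹)² - 1 = (μ μ⁻¹ - 1) (μ μ⁻¹ + 1)`
    linear_combination
      (2 / (μ + μ⁻¹) * (μ⁻¹ * (μ ^ 2) ^ n + μ * (μ⁻¹ ^ 2) ^ n) * (μ * μ⁻¹ + 1)) * hμμ

theorem exists_norm_lt_norm_of_norm_sub_mul_pow_le {𝕜 : Type*} [NormedDivisionRing 𝕜]
    {f : ℕ → 𝕜} {a q : 𝕜} {C : ℝ} (ha : a ≠ 0) (hq : 1 < ‖q‖) (hf : ∀ n, ‖f n - a * q ^ n‖ ≤ C) :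
    ∃ N : ℕ, ∀ m n : ℕ, N ≤ m → m < n → ‖f m‖ < ‖f n‖ := by
  have hgrow : ∀ᶠ m in Filter.atTop, 2 * C < ‖a‖ * (‖q‖ - 1) * ‖q‖ ^ m :=
    ((tendsto_pow_atTop_atTop_of_one_lt hq).const_mul_atTop
      (mul_pos (norm_pos_iff.mpr ha) (sub_pos.mpr hq))).eventually_gt_atTop _
  obtain ⟨N, hN⟩ := Filter.eventually_atTop.mp hgrow
  refine ⟨N, fun m n hm hmn => ?_⟩
  have hupper : ‖f m‖ ≤ ‖a‖ * ‖q‖ ^ m + C := by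
    have := norm_le_norm_add_norm_sub' (f m) (a * q ^ m)
    rw [norm_mul, norm_pow] at this
    linarith [hf m]
  have hlower : ‖a‖ * ‖q‖ ^ n - C ≤ ‖f n‖ := by
    have := norm_sub_norm_le (a * q ^ n) (f n)
    rw [norm_mul, norm_pow, norm_sub_rev] at this
    linarith [hf n]
  have hpow : ‖q‖ ^ m * ‖q‖ ≤ ‖q‖ ^ n := by
    rw [← pow_succ]; exact pow_le_pow_right₀ hq.le hmn
  nlinarith [hN m hm, norm_nonneg a]

theorem tau_eventually_injective (ω μ : ℂ) (hμ : μ ≠ 0)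
    (hchar : μ ^ 2 + μ⁻¹ ^ 2 = 2 - ω) (hden : μ + μ⁻¹ ≠ 0)
    (habs : ‖μ‖ ≠ 1) :
    ∃ N : ℕ, ∀ m n : ℕ, N ≤ m → N ≤ n → τ ω m = τ ω n → m = n := by
  wlog hμ₁ : 1 < ‖μ‖ generalizing μ
  · refine this μ⁻¹ (inv_ne_zero hμ) (by rwa [inv_inv, add_comm]) (by rwa [inv_inv, add_comm])
      (by rwa [norm_inv, inv_ne_one]) ?_
    rw [norm_inv, one_lt_inv₀ (norm_pos_iff.mpr hμ)]
    exact (not_lt.mp hμ₁).lt_of_ne habs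
  have hclose : ∀ n, ‖τ ω n - 2 / (μ + μ⁻¹) * μ⁻¹ * (μ ^ 2) ^ n‖ ≤ ‖2 / (μ + μ⁻¹) * μ‖ := by
    intro n
    have hinv : ‖μ⁻¹‖ ≤ 1 := by
      rw [norm_inv]; exact inv_le_one_of_one_le₀ hμ₁.le
    have hsmall : ‖μ⁻¹ ^ 2‖ ^ n ≤ 1 :=
      pow_le_one₀ (norm_nonneg _) (norm_pow μ⁻¹ 2 ▸ pow_le_one₀ (norm_nonneg _) hinv)
    rw [τ_eq_of_sq_add_inv_sq hμ hchar hden, mul_add, ← mul_assoc, add_sub_cancel_left,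
      ← mul_assoc, norm_mul, norm_pow]
    exact mul_le_of_le_one_right (norm_nonneg _) hsmall
  obtain ⟨N, hN⟩ := exists_norm_lt_norm_of_norm_sub_mul_pow_le (by simp [hden, hμ])
    (by rw [norm_pow]; exact one_lt_pow₀ hμ₁ two_ne_zero) hclose
  refine ⟨N, fun m n hm hn h => ?_⟩
  rcases lt_trichotomy m n with hmn | rfl | hmn
  · exact absurd (congrArg norm h) (hN m n hm hmn).ne
  · rfl
  · exact absurd (congrArg norm h) (hN n m hn hmn).ne'
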